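/- Let x ∈ A satisfy v_{ρ,σ}(x) ≥ ρ + σ for every pair (ρ,σ) of relatively prime positive integers, and suppose x has adjacent edges E_{ρ₁,σ₁}(x) and E_{ρ₂,σ₂}(x), where (ρ₁,σ₁), (ρ₂,σ₂) are pairs of relatively prime positive integers with ρ₁/σ₁ ≠ ρ₂/σ₂. If x is solvable and y ∈ A satisfies [x, y] = 1, then E_{ρ₁,σ₁}(y) and E_{ρ₂,σ₂}(y) are adjacent edges of y. (Lemma 5.4) -/

import Mathlib

open scoped BigOperators

/-- Defining relation of the Weyl algebra: `p * q = q * p + 1`. -/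
inductive WeylRel (F : Type*) [CommRing F] :
    FreeAlgebra F (Fin 2) → FreeAlgebra F (Fin 2) → Prop
  | comm : WeylRel F (FreeAlgebra.ι F 0 * FreeAlgebra.ι F 1)
      (FreeAlgebra.ι F 1 * FreeAlgebra.ι F 0 + 1)

/-- The Weyl algebra over `F`. -/
abbrev WeylAlgebra (F : Type*) [CommRing F] := RingQuot (WeylRel F)

variable (F : Type*) [Field F] [CharZero F]

/-- The generator `p` of the Weyl algebra. -/
noncomputable def Wp : WeylAlgebra F :=
  RingQuot.mkAlgHom F (WeylRel F) (FreeAlgebra.ι F 0)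

/-- The generator `q` of the Weyl algebra. -/
noncomputable def Wq : WeylAlgebra F :=
  RingQuot.mkAlgHom F (WeylRel F) (FreeAlgebra.ι F 1)

/-- `x` is solvable if `[x, y] = 1` for some `y`. -/
def Solvable (x : WeylAlgebra F) : Prop := ∃ y : WeylAlgebra F, x * y - y * x = 1

/-- The centralizer `C(x)`. -/
def Cset (x : WeylAlgebra F) : Set (WeylAlgebra F) := {y | x * y - y * x = 0}

/-- `N(x) = {y | (ad x)^n y = 0 for some n ≥ 1}`. -/
def Nset (x : WeylAlgebra F) : Set (WeylAlgebra F) :=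
  {y | ∃ n : ℕ, 1 ≤ n ∧ (fun z => x * z - z * x)^[n] y = 0}

/-- `D(x) = {y | [x,y] = λ y for some scalar λ}`. -/
def Dset (x : WeylAlgebra F) : Set (WeylAlgebra F) :=
  {y | ∃ c : F, x * y - y * x = c • y}

def Delta1 : Set (WeylAlgebra F) :=
  {x | x ∉ Set.range (algebraMap F (WeylAlgebra F)) ∧
    Nset F x = Set.univ ∧ Dset F x = Cset F x}

def Delta2 : Set (WeylAlgebra F) :=
  {x | x ∉ Set.range (algebraMap F (WeylAlgebra F)) ∧
    Nset F x ≠ Set.univ ∧ Nset F x ≠ Cset F x ∧ Dset F x = Cset F x}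

/-- The graded component `A_s = {a | [pq, a] = s • a}`. -/
def Wgrade (s : ℤ) : Set (WeylAlgebra F) :=
  {a | (Wp F * Wq F) * a - a * (Wp F * Wq F) = s • a}

/-- The monomial `p^i q^j`. -/
noncomputable def Wmono (i j : ℕ) : WeylAlgebra F := Wp F ^ i * Wq F ^ j

/-- `α` is the coordinate family of `x` in the basis `p^i q^j`. -/
def Represents (α : (ℕ × ℕ) →₀ F) (x : WeylAlgebra F) : Prop :=
  x = α.sum fun ij c => c • Wmono F ij.1 ij.2

/-- `v_{ρ,σ}(x) = max { iρ + jσ | (i,j) ∈ E(x) }`. -/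
def vdeg (α : (ℕ × ℕ) →₀ F) (ρ σ : ℕ) : ℕ :=
  α.support.sup fun ij => ij.1 * ρ + ij.2 * σ

/-- `E_{ρ,σ}(x)`. -/
def Eset (α : (ℕ × ℕ) →₀ F) (ρ σ : ℕ) : Finset (ℕ × ℕ) :=
  α.support.filter fun ij => ij.1 * ρ + ij.2 * σ = vdeg F α ρ σ

/-- The `(ρ,σ)`-polynomial of `x`, an element of `F[X,Y]`. -/
noncomputable def wpoly (α : (ℕ × ℕ) →₀ F) (ρ σ : ℕ) : MvPolynomial (Fin 2) F :=
  ∑ ij ∈ Eset F α ρ σ,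
    MvPolynomial.monomial (Finsupp.single 0 ij.1 + Finsupp.single 1 ij.2) (α ij)

/-- The `(ρ,σ)`-term of `x`, an element of the Weyl algebra. -/
noncomputable def wterm (α : (ℕ × ℕ) →₀ F) (ρ σ : ℕ) : WeylAlgebra F :=
  ∑ ij ∈ Eset F α ρ σ, α ij • Wmono F ij.1 ij.2


/-!
Weight `p^i q^j` by `iρ + jσ`. Normal ordering gives
`[p^a q^b, p^c q^d] = (ad - bc) p^(a+c-1) q^(b+d-1)` plus terms `p^(a+c-k) q^(b+d-k)`, `k ≥ 2`, of
lower weight. So at weight `v(x) + v(y) - (ρ + σ)`, which is positive, the coefficients of the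
scalar `[x, y]` are those of the Poisson bracket of the leading forms of `x` and `y`, and they
vanish. If the leading form of `x` is a monomial `P`, this puts every leading monomial of `y` on
the ray through `P`, and on that ray a point of maximal weight for one positive direction is
maximal for all of them.

Hence an edge of `x` is matched by an edge of `y`: were the leading form of `y` a monomial, the
same argument with `x` and `y` exchanged would make that of `x` a monomial. In every direction
strictly between `(ρ₁, σ₁)` and `(ρ₂, σ₂)` the leading form of `x` is the vertex monomial `P`, so
`y` has one and the same leading monomial `Q` in all these directions; directions close to either
edge show that `Q` lies on both edges of `y`.
-/

section

variable {F}

open Finset Polynomial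

section

omit [CharZero F]

theorem Wp_mul_Wq : Wp F * Wq F = Wq F * Wp F + 1 := by
  simpa only [map_mul, map_add, map_one, Wp, Wq] using
    RingQuot.mkAlgHom_rel F (WeylRel.comm (F := F))

/-- `p` acts by multiplication by `X` and `q` by `-d/dX`, so that `p^i q^j` acts as
`X^i (-d/dX)^j`, which is triangular on the basis `X^n`. -/
noncomputable def weylRep : WeylAlgebra F →ₐ[F] Module.End F F[X] :=
  RingQuot.liftAlgHom F ⟨FreeAlgebra.lift F ![LinearMap.mulLeft F X, -derivative], by
    rintro _ _ ⟨⟩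
    refine LinearMap.ext fun f => ?_
    simp⟩

theorem weylRep_Wp : weylRep (Wp F) = LinearMap.mulLeft F X := by
  simp [weylRep, Wp]

theorem weylRep_Wq : weylRep (Wq F) = -derivative := by
  simp [weylRep, Wq]

theorem weylRep_Wmono_X_pow (i j n : ℕ) :
    weylRep (Wmono F i j) (X ^ n) =
      C ((-1) ^ j * (n.descFactorial j : F)) * X ^ (i + (n - j)) := by
  rw [Wmono, map_mul, map_pow weylRep, map_pow weylRep, weylRep_Wp, weylRep_Wq,
    ← neg_one_smul F derivative, _root_.smul_pow, LinearMap.pow_mulLeft, Module.End.mul_apply,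
    LinearMap.smul_apply, Module.End.pow_apply, iterate_derivative_X_pow_eq_smul,
    LinearMap.mulLeft_apply, smul_eq_C_mul, smul_eq_C_mul, pow_add, C_mul]
  ring

/-- The coefficients of the normal ordering `q^b p^c = ∑ₖ orderingCoeff b c k • p^(c-k) q^(b-k)`. -/
def orderingCoeff (b : ℕ) : ℕ → ℕ → ℤ
  | _, 0 => 1
  | 0, _ + 1 => 0
  | c + 1, k + 1 => orderingCoeff b c (k + 1) - (b - k : ℕ) * orderingCoeff b c k

@[simp] theorem orderingCoeff_zero (b c : ℕ) : orderingCoeff b c 0 = 1 := by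
  cases c <;> rfl

theorem orderingCoeff_succ_succ (b c k : ℕ) :
    orderingCoeff b (c + 1) (k + 1) =
      orderingCoeff b c (k + 1) - (b - k : ℕ) * orderingCoeff b c k :=
  rfl

theorem orderingCoeff_one (b c : ℕ) : orderingCoeff b c 1 = -(b * c : ℕ) := by
  induction c with
  | zero => rfl
  | succ c ih =>
    rw [orderingCoeff_succ_succ, ih, orderingCoeff_zero, Nat.sub_zero]
    push_cast
    ring

theorem orderingCoeff_eq_zero {b c k : ℕ} (h : min b c < k) : orderingCoeff b c k = 0 := by
  induction c generalizing k with
  | zero => obtain ⟨k, rfl⟩ := Nat.exists_eq_add_one.2 (by omega : 0 < k); rfl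
  | succ c ih =>
    obtain ⟨k, rfl⟩ := Nat.exists_eq_add_one.2 (by omega : 0 < k)
    rw [orderingCoeff_succ_succ, ih (by omega)]
    rcases (show min b c < k ∨ b = k by omega) with h' | rfl
    · rw [ih h', mul_zero, sub_zero]
    · simp

theorem Wq_pow_mul_Wp (m : ℕ) : Wq F ^ m * Wp F = Wp F * Wq F ^ m - m • Wq F ^ (m - 1) := by
  induction m with
  | zero => simp
  | succ m ih =>
    have hqp : Wq F * Wp F = Wp F * Wq F - 1 := by rw [Wp_mul_Wq, add_sub_cancel_right]
    have hq : Wq F * (m • Wq F ^ (m - 1)) = m • Wq F ^ m := by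
      cases m with
      | zero => simp
      | succ m => rw [mul_smul_comm, ← pow_succ', Nat.add_sub_cancel]
    rw [pow_succ', mul_assoc, ih, mul_sub, ← mul_assoc, hqp, hq, Nat.add_sub_cancel, sub_mul,
      one_mul, mul_assoc, succ_nsmul]
    abel

theorem Wq_pow_mul_Wp_pow (b c : ℕ) :
    Wq F ^ b * Wp F ^ c =
      ∑ k ∈ range (c + 1), (orderingCoeff b c k : F) • (Wp F ^ (c - k) * Wq F ^ (b - k)) := by
  induction c with
  | zero => simp
  | succ c ih =>
    have hterm (k : ℕ) : Wp F ^ (c - k) * Wq F ^ (b - k) * Wp F =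
        Wp F ^ (c - k + 1) * Wq F ^ (b - k) -
          ((b - k : ℕ) : F) • (Wp F ^ (c - k) * Wq F ^ (b - (k + 1))) := by
      rw [mul_assoc, Wq_pow_mul_Wp, mul_sub, ← mul_assoc, ← pow_succ, mul_smul_comm, Nat.sub_sub,
        Nat.cast_smul_eq_nsmul]
    have hshift : ∑ k ∈ range (c + 1),
          (orderingCoeff b c k : F) • (Wp F ^ (c - k + 1) * Wq F ^ (b - k)) =
        Wp F ^ (c + 1) * Wq F ^ b + ∑ k ∈ range (c + 1),
          (orderingCoeff b c (k + 1) : F) • (Wp F ^ (c - k) * Wq F ^ (b - (k + 1))) := by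
      rw [sum_range_succ', sum_range_succ _ c, orderingCoeff_eq_zero (by omega : min b c < c + 1),
        Int.cast_zero, zero_smul, add_zero, orderingCoeff_zero, Int.cast_one, one_smul,
        Nat.sub_zero, Nat.sub_zero, add_comm]
      congr 1
      refine sum_congr rfl fun k hk => ?_
      rw [show c - (k + 1) + 1 = c - k by have := mem_range.1 hk; omega]
    have hcoeff : ∀ k ∈ range (c + 1),
        (orderingCoeff b (c + 1) (k + 1) : F) • (Wp F ^ (c + 1 - (k + 1)) * Wq F ^ (b - (k + 1))) =
          (orderingCoeff b c (k + 1) : F) • (Wp F ^ (c - k) * Wq F ^ (b - (k + 1))) -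
            ((orderingCoeff b c k : F) * (b - k : ℕ)) •
              (Wp F ^ (c - k) * Wq F ^ (b - (k + 1))) := by
      intro k _
      rw [orderingCoeff_succ_succ, Nat.add_sub_add_right]
      push_cast
      module
    rw [pow_succ, ← mul_assoc, ih, sum_mul]
    simp_rw [smul_mul_assoc, hterm, smul_sub, smul_smul]
    rw [sum_sub_distrib, hshift, sum_range_succ' _ (c + 1), sum_congr rfl hcoeff, sum_sub_distrib,
      orderingCoeff_zero, Int.cast_one, one_smul, Nat.sub_zero, Nat.sub_zero]
    abel

theorem Wmono_mul_Wmono (a b c d : ℕ) {K : ℕ} (hK : c < K) :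
    Wmono F a b * Wmono F c d =
      ∑ k ∈ range K, (orderingCoeff b c k : F) • Wmono F (a + c - k) (b + d - k) := by
  have hvanish : ∀ k, min b c < k → (orderingCoeff b c k : F) = 0 := fun k hk => by
    rw [orderingCoeff_eq_zero hk, Int.cast_zero]
  rw [← sum_subset (range_subset_range.2 (by omega : c + 1 ≤ K)) fun k _ hk => by
    rw [hvanish k (by simp at hk; omega), zero_smul]]
  rw [Wmono, Wmono, mul_assoc, ← mul_assoc (Wq F ^ b), Wq_pow_mul_Wp_pow, sum_mul, mul_sum]
  refine sum_congr rfl fun k hk => ?_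
  by_cases h : min b c < k
  · rw [hvanish k h, zero_smul, zero_smul, zero_mul, mul_zero]
  · rw [smul_mul_assoc, mul_smul_comm, Wmono, ← mul_assoc, ← mul_assoc, ← pow_add, mul_assoc,
      ← pow_add, show a + (c - k) = a + c - k by omega, show b - k + d = b + d - k by omega]

/-- The coordinates of `[p^a q^b, p^c q^d]` in the basis `p^i q^j`, for `m = (a, b)`,
`n = (c, d)`. -/
noncomputable def bracketCoeffs (m n : ℕ × ℕ) : (ℕ × ℕ) →₀ F :=
  ∑ k ∈ range (m.1 + n.1 + 1), Finsupp.single (m.1 + n.1 - k, m.2 + n.2 - k)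
    ((orderingCoeff m.2 n.1 k - orderingCoeff n.2 m.1 k : ℤ) : F)

theorem Wmono_commutator (m n : ℕ × ℕ) :
    Wmono F m.1 m.2 * Wmono F n.1 n.2 - Wmono F n.1 n.2 * Wmono F m.1 m.2 =
      Finsupp.linearCombination F (fun ij => Wmono F ij.1 ij.2) (bracketCoeffs m n) := by
  rw [Wmono_mul_Wmono _ _ _ _ (by omega : n.1 < m.1 + n.1 + 1),
    Wmono_mul_Wmono _ _ _ _ (by omega : m.1 < m.1 + n.1 + 1), ← sum_sub_distrib, bracketCoeffs,
    map_sum]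
  refine sum_congr rfl fun k _ => ?_
  rw [Finsupp.linearCombination_single, add_comm n.1, add_comm n.2, Int.cast_sub, sub_smul]

theorem commutator_eq_linearCombination {α β : (ℕ × ℕ) →₀ F} {x y : WeylAlgebra F}
    (hx : Represents F α x) (hy : Represents F β y) :
    x * y - y * x = Finsupp.linearCombination F (fun ij => Wmono F ij.1 ij.2)
      (∑ m ∈ α.support, ∑ n ∈ β.support, (α m * β n) • bracketCoeffs m n) := by
  rw [hx, hy]
  simp only [Finsupp.sum, sum_mul, mul_sum, smul_mul_smul_comm, map_sum, map_smul]
  rw [sum_comm (s := β.support), ← sum_sub_distrib]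
  refine sum_congr rfl fun m _ => ?_
  rw [← sum_sub_distrib]
  refine sum_congr rfl fun n _ => ?_
  rw [mul_comm (β n), ← Wmono_commutator, smul_sub]

/-- Near the top weight only the `k = 1` term of `bracketCoeffs` survives: the `k = 0` terms of
the two products cancel, and the terms with `k ≥ 2` have weight too low. -/
theorem bracketCoeffs_apply_of_weight_le {ρ σ : ℕ} (hρσ : 0 < ρ + σ) {m n ij : ℕ × ℕ}
    (h : m.1 * ρ + m.2 * σ + (n.1 * ρ + n.2 * σ) ≤ ij.1 * ρ + ij.2 * σ + (ρ + σ)) :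
    bracketCoeffs m n ij = if m + n = ij + (1, 1) then (m.1 * n.2 - m.2 * n.1 : F) else 0 := by
  have hvanish (k : ℕ) (hk : ¬(k ≤ m.1 + n.1 ∧ k ≤ m.2 + n.2)) :
      orderingCoeff m.2 n.1 k - orderingCoeff n.2 m.1 k = 0 := by
    rw [orderingCoeff_eq_zero (by omega), orderingCoeff_eq_zero (by omega), sub_zero]
  rw [bracketCoeffs, Finsupp.finsetSum_apply, sum_eq_single 1]
  · rw [Finsupp.single_apply]
    by_cases hmn : 1 ≤ m.1 + n.1 ∧ 1 ≤ m.2 + n.2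
    · rw [orderingCoeff_one, orderingCoeff_one]
      push_cast
      refine if_congr ?_ (by ring) rfl
      simp only [Prod.ext_iff, Prod.fst_add, Prod.snd_add]
      omega
    · have hne : m + n ≠ ij + (1, 1) := by
        simp only [ne_eq, Prod.ext_iff, Prod.fst_add, Prod.snd_add]
        omega
      simp [hvanish 1 hmn, hne]
  · intro k _ hk1
    rw [Finsupp.single_apply]
    split_ifs with hij
    · obtain _ | _ | k := k
      · simp
      · contradiction
      · rw [hvanish, Int.cast_zero]
        rintro ⟨h1, h2⟩
        subst hij
        have : (m.1 + n.1 - (k + 2)) * ρ + (m.2 + n.2 - (k + 2)) * σ + (k + 2) * (ρ + σ) =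
            m.1 * ρ + m.2 * σ + (n.1 * ρ + n.2 * σ) := by
          zify [h1, h2]
          ring
        nlinarith
    · rfl
  · intro h1
    rw [hvanish 1 (by simp at h1; omega), Int.cast_zero, Finsupp.single_zero, Finsupp.zero_apply]

section NewtonPolygon

variable {α : (ℕ × ℕ) →₀ F}

theorem le_vdeg {ij : ℕ × ℕ} (h : ij ∈ α.support) (ρ σ : ℕ) :
    ij.1 * ρ + ij.2 * σ ≤ vdeg F α ρ σ :=
  le_sup (f := fun ij : ℕ × ℕ => ij.1 * ρ + ij.2 * σ) h

theorem mem_Eset {ρ σ : ℕ} {ij : ℕ × ℕ} :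
    ij ∈ Eset F α ρ σ ↔ ij ∈ α.support ∧ ij.1 * ρ + ij.2 * σ = vdeg F α ρ σ :=
  mem_filter

theorem Eset_nonempty (h : α.support.Nonempty) (ρ σ : ℕ) : (Eset F α ρ σ).Nonempty := by
  obtain ⟨ij, hij, hsup⟩ := exists_mem_eq_sup α.support h fun ij => ij.1 * ρ + ij.2 * σ
  exact ⟨ij, mem_Eset.2 ⟨hij, hsup.symm⟩⟩

theorem support_nonempty_of_vdeg_pos {ρ σ : ℕ} (h : 0 < vdeg F α ρ σ) : α.support.Nonempty := by
  rw [nonempty_iff_ne_empty]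
  rintro hempty
  simp [vdeg, hempty] at h

theorem vdeg_mul (k ρ σ : ℕ) : vdeg F α (k * ρ) (k * σ) = k * vdeg F α ρ σ := by
  rcases α.support.eq_empty_or_nonempty with h | h
  · simp [vdeg, h]
  apply le_antisymm
  · refine Finset.sup_le fun ij hij => ?_
    calc ij.1 * (k * ρ) + ij.2 * (k * σ) = k * (ij.1 * ρ + ij.2 * σ) := by ring
      _ ≤ k * vdeg F α ρ σ := Nat.mul_le_mul_left k (le_vdeg hij ρ σ)
  · obtain ⟨ij, hij⟩ := Eset_nonempty h ρ σ
    obtain ⟨hsupp, hw⟩ := mem_Eset.1 hij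
    calc k * vdeg F α ρ σ = ij.1 * (k * ρ) + ij.2 * (k * σ) := by rw [← hw]; ring
      _ ≤ vdeg F α (k * ρ) (k * σ) := le_vdeg hsupp _ _

theorem le_vdeg_of_forall_coprime
    (h : ∀ ρ σ : ℕ, 0 < ρ → 0 < σ → Nat.Coprime ρ σ → ρ + σ ≤ vdeg F α ρ σ)
    {ρ σ : ℕ} (hρ : 0 < ρ) (hσ : 0 < σ) : ρ + σ ≤ vdeg F α ρ σ := by
  obtain ⟨g, ρ', σ', -, hco, rfl, rfl⟩ := Nat.exists_coprime' (Nat.gcd_pos_of_pos_left σ hρ)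
  rw [mul_comm ρ', mul_comm σ', vdeg_mul, ← mul_add]
  exact Nat.mul_le_mul_left g
    (h ρ' σ' (Nat.pos_of_mul_pos_right hρ) (Nat.pos_of_mul_pos_right hσ) hco)

theorem Eset_add_eq_inter {ρ₁ σ₁ ρ₂ σ₂ s t : ℕ} (hs : 0 < s) (ht : 0 < t)
    (h : (Eset F α ρ₁ σ₁ ∩ Eset F α ρ₂ σ₂).Nonempty) :
    Eset F α (s * ρ₁ + t * ρ₂) (s * σ₁ + t * σ₂) = Eset F α ρ₁ σ₁ ∩ Eset F α ρ₂ σ₂ := by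
  have hsplit (R : ℕ × ℕ) : R.1 * (s * ρ₁ + t * ρ₂) + R.2 * (s * σ₁ + t * σ₂) =
      s * (R.1 * ρ₁ + R.2 * σ₁) + t * (R.1 * ρ₂ + R.2 * σ₂) := by ring
  have hle {R : ℕ × ℕ} (hR : R ∈ α.support) :
      s * (R.1 * ρ₁ + R.2 * σ₁) ≤ s * vdeg F α ρ₁ σ₁ ∧
        t * (R.1 * ρ₂ + R.2 * σ₂) ≤ t * vdeg F α ρ₂ σ₂ :=
    ⟨Nat.mul_le_mul_left s (le_vdeg hR _ _), Nat.mul_le_mul_left t (le_vdeg hR _ _)⟩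
  obtain ⟨P, hP⟩ := h
  obtain ⟨⟨hPsupp, hP₁⟩, ⟨-, hP₂⟩⟩ := And.imp mem_Eset.1 mem_Eset.1 (mem_inter.1 hP)
  have hvdeg : vdeg F α (s * ρ₁ + t * ρ₂) (s * σ₁ + t * σ₂) =
      s * vdeg F α ρ₁ σ₁ + t * vdeg F α ρ₂ σ₂ := by
    refine le_antisymm (Finset.sup_le fun R hR => ?_) ?_
    · have := hle hR
      rw [hsplit]
      omega
    · have := le_vdeg hPsupp (s * ρ₁ + t * ρ₂) (s * σ₁ + t * σ₂)
      rwa [hsplit, hP₁, hP₂] at this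
  ext R
  simp only [mem_inter, mem_Eset, hvdeg, hsplit]
  constructor
  · rintro ⟨hR, hw⟩
    have := hle hR
    exact ⟨⟨hR, Nat.eq_of_mul_eq_mul_left hs (by omega)⟩,
      ⟨hR, Nat.eq_of_mul_eq_mul_left ht (by omega)⟩⟩
  · rintro ⟨⟨hR, hw₁⟩, ⟨-, hw₂⟩⟩
    exact ⟨hR, by rw [hw₁, hw₂]⟩

theorem mem_Eset_of_mem_Eset_add {ρ₁ σ₁ ρ₂ σ₂ s t : ℕ} {Q : ℕ × ℕ}
    (hQ : Q ∈ Eset F α (s * ρ₁ + t * ρ₂) (s * σ₁ + t * σ₂)) (hst : t * vdeg F α ρ₂ σ₂ < s) :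
    Q ∈ Eset F α ρ₁ σ₁ := by
  obtain ⟨hQsupp, hQw⟩ := mem_Eset.1 hQ
  obtain ⟨R, hR⟩ := Eset_nonempty ⟨Q, hQsupp⟩ ρ₁ σ₁
  obtain ⟨hRsupp, hRw⟩ := mem_Eset.1 hR
  refine mem_Eset.2 ⟨hQsupp, le_antisymm (le_vdeg hQsupp _ _) ?_⟩
  by_contra! hlt
  have hsplit (R : ℕ × ℕ) : R.1 * (s * ρ₁ + t * ρ₂) + R.2 * (s * σ₁ + t * σ₂) =
      s * (R.1 * ρ₁ + R.2 * σ₁) + t * (R.1 * ρ₂ + R.2 * σ₂) := by ring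
  have hmax := le_vdeg hRsupp (s * ρ₁ + t * ρ₂) (s * σ₁ + t * σ₂)
  rw [← hQw, hsplit, hsplit, hRw] at hmax
  have h₁ := Nat.mul_le_mul_left s (Nat.succ_le_of_lt hlt)
  have h₂ := Nat.mul_le_mul_left t (le_vdeg hQsupp ρ₂ σ₂)
  rw [Nat.mul_succ] at h₁
  linarith [Nat.zero_le (t * (R.1 * ρ₂ + R.2 * σ₂))]

theorem card_inter_Eset_le_one {ρ₁ σ₁ ρ₂ σ₂ : ℕ} (hne : ρ₁ * σ₂ ≠ ρ₂ * σ₁) :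
    (Eset F α ρ₁ σ₁ ∩ Eset F α ρ₂ σ₂).card ≤ 1 := by
  refine card_le_one.2 fun R hR R' hR' => ?_
  simp only [mem_inter, mem_Eset] at hR hR'
  have e₁ : (R.1 * ρ₁ + R.2 * σ₁ : ℤ) = R'.1 * ρ₁ + R'.2 * σ₁ := by
    exact_mod_cast hR.1.2.trans hR'.1.2.symm
  have e₂ : (R.1 * ρ₂ + R.2 * σ₂ : ℤ) = R'.1 * ρ₂ + R'.2 * σ₂ := by
    exact_mod_cast hR.2.2.trans hR'.2.2.symm
  have hdet : (ρ₁ * σ₂ - ρ₂ * σ₁ : ℤ) ≠ 0 := sub_ne_zero.2 (by exact_mod_cast hne)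
  -- Cramer's rule
  have h₁ : ((R.1 : ℤ) - R'.1) * (ρ₁ * σ₂ - ρ₂ * σ₁) = 0 := by
    linear_combination σ₂ * e₁ - σ₁ * e₂
  have h₂ : ((R.2 : ℤ) - R'.2) * (ρ₁ * σ₂ - ρ₂ * σ₁) = 0 := by
    linear_combination ρ₁ * e₂ - ρ₂ * e₁
  have := (mul_eq_zero.1 h₁).resolve_right hdet
  have := (mul_eq_zero.1 h₂).resolve_right hdet
  ext <;> omega

theorem weight_add (m n : ℕ × ℕ) (ρ σ : ℕ) :
    (m + n).1 * ρ + (m + n).2 * σ = m.1 * ρ + m.2 * σ + (n.1 * ρ + n.2 * σ) := by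
  simp only [Prod.fst_add, Prod.snd_add]
  ring

theorem eq_and_eq_of_add_eq_add_of_Eset_eq_singleton {β : (ℕ × ℕ) →₀ F} {ρ σ : ℕ}
    {P Q m n : ℕ × ℕ}
    (hP : Eset F α ρ σ = {P}) (hQ : Q ∈ Eset F β ρ σ) (hm : m ∈ α.support) (hn : n ∈ β.support)
    (h : m + n = P + Q) : m = P ∧ n = Q := by
  have hw := weight_add m n ρ σ
  rw [h, weight_add, (mem_Eset.1 (hP ▸ mem_singleton_self P)).2, (mem_Eset.1 hQ).2] at hw
  have := le_vdeg hm ρ σ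
  have := le_vdeg hn ρ σ
  have hmP : m = P := mem_singleton.1 (hP ▸ mem_Eset.2 ⟨hm, by omega⟩)
  exact ⟨hmP, add_left_cancel (hmP ▸ h)⟩

theorem le_of_collinear {ρ σ : ℕ} {P Q Q' : ℕ × ℕ} (hP : 0 < P.1 * ρ + P.2 * σ)
    (hQ : P.1 * Q.2 = P.2 * Q.1) (hQ' : P.1 * Q'.2 = P.2 * Q'.1)
    (h : Q'.1 * ρ + Q'.2 * σ ≤ Q.1 * ρ + Q.2 * σ) : Q' ≤ Q := by
  constructor
  · refine Nat.le_of_mul_le_mul_right ?_ hP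
    nlinarith
  · refine Nat.le_of_mul_le_mul_right ?_ hP
    nlinarith

end NewtonPolygon

theorem eq_algebraMap_of_vdeg_eq_zero {β : (ℕ × ℕ) →₀ F} {y : WeylAlgebra F}
    (hy : Represents F β y) {ρ σ : ℕ} (hρ : 0 < ρ) (hσ : 0 < σ) (h : vdeg F β ρ σ = 0) :
    y = algebraMap F _ (β 0) := by
  have hsupp : β.support ⊆ {0} := fun ij hij => by
    have := le_vdeg hij ρ σ
    have : ij.1 = 0 ∧ ij.2 = 0 := by constructor <;> nlinarith
    simp [Prod.ext_iff, this]
  rw [hy, Finsupp.sum_of_support_subset β hsupp (fun ij c => c • Wmono F ij.1 ij.2)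
      (fun _ _ => zero_smul F _), sum_singleton, Algebra.algebraMap_eq_smul_one, Prod.fst_zero,
    Prod.snd_zero, Wmono, pow_zero, pow_zero, mul_one]

theorem vdeg_pos_of_commutator_eq_one {β : (ℕ × ℕ) →₀ F} {x y : WeylAlgebra F}
    (hy : Represents F β y) (hxy : x * y - y * x = 1) {ρ σ : ℕ} (hρ : 0 < ρ) (hσ : 0 < σ) :
    0 < vdeg F β ρ σ := by
  refine Nat.pos_of_ne_zero fun h => ?_
  rw [eq_algebraMap_of_vdeg_eq_zero hy hρ hσ h, ← Algebra.commutes, sub_self] at hxy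
  have := (weylRep (F := F)).toRingHom.domain_nontrivial
  exact zero_ne_one hxy

end

theorem linearIndependent_Wmono : LinearIndependent F fun ij : ℕ × ℕ => Wmono F ij.1 ij.2 := by
  classical
  refine LinearIndependent.of_comp weylRep.toLinearMap (linearIndependent_iff'.2 ?_)
  intro s g hg
  by_contra! hne
  obtain ⟨m, hm, hmin⟩ := (s.filter (g · ≠ 0)).exists_min_image Prod.snd
    (by simpa [filter_nonempty_iff] using hne)
  rw [mem_filter] at hm
  -- applied to `X ^ m.2`, only the term `m` contributes to the coefficient of `X ^ m.1`
  have key := congr(($hg (X ^ m.2)).coeff m.1)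
  simp only [LinearMap.sum_apply, Function.comp_apply, LinearMap.smul_apply,
    AlgHom.toLinearMap_apply, weylRep_Wmono_X_pow, finsetSum_coeff, coeff_smul, coeff_C_mul_X_pow,
    LinearMap.zero_apply, coeff_zero, smul_eq_mul] at key
  rw [sum_eq_single_of_mem m hm.1] at key
  · simp [Nat.descFactorial_self, hm.2, Nat.factorial_ne_zero] at key
  · intro k hk hkm
    by_cases hgk : g k = 0
    · simp [hgk]
    rcases (hmin k (mem_filter.2 ⟨hk, hgk⟩)).lt_or_eq with hlt | heq
    · simp [Nat.descFactorial_eq_zero_iff_lt.2 hlt]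
    · have : m.1 ≠ k.1 + (m.2 - k.2) := fun h => hkm (Prod.ext (by omega) heq.symm)
      simp [this]

variable {α β : (ℕ × ℕ) →₀ F} {x y : WeylAlgebra F} {c : F}

theorem sum_bracketCoeffs_eq_zero (hx : Represents F α x) (hy : Represents F β y)
    (hxy : x * y - y * x = algebraMap F _ c) {ij : ℕ × ℕ} (hij : ij ≠ 0) :
    ∑ m ∈ α.support, ∑ n ∈ β.support, α m * β n * bracketCoeffs m n ij = 0 := by
  have hc : algebraMap F (WeylAlgebra F) c =
      Finsupp.linearCombination F (fun ij : ℕ × ℕ => Wmono F ij.1 ij.2) (Finsupp.single 0 c) := by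
    rw [Finsupp.linearCombination_single, Prod.fst_zero, Prod.snd_zero, Wmono, pow_zero, pow_zero,
      mul_one, Algebra.algebraMap_eq_smul_one]
  have h := linearIndependent_Wmono.finsuppLinearCombination_injective
    ((commutator_eq_linearCombination hx hy).symm.trans (hxy.trans hc))
  simpa [Finsupp.finsetSum_apply, Finsupp.single_eq_of_ne hij] using congr($h ij)

theorem collinear_of_Eset_eq_singleton (hx : Represents F α x) (hy : Represents F β y)
    (hxy : x * y - y * x = algebraMap F _ c) {ρ σ : ℕ}
    (hv : ρ + σ < vdeg F α ρ σ + vdeg F β ρ σ) {P Q : ℕ × ℕ}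
    (hP : Eset F α ρ σ = {P}) (hQ : Q ∈ Eset F β ρ σ) : P.1 * Q.2 = P.2 * Q.1 := by
  obtain ⟨hPsupp, hPw⟩ := mem_Eset.1 (hP ▸ mem_singleton_self P)
  obtain ⟨hQsupp, hQw⟩ := mem_Eset.1 hQ
  by_cases hdeg : P.1 + Q.1 = 0 ∨ P.2 + Q.2 = 0
  · rcases hdeg with h | h <;> simp [Nat.eq_zero_of_add_eq_zero h]
  have hρσ : 0 < ρ + σ := by
    by_contra! h
    obtain ⟨rfl, rfl⟩ : ρ = 0 ∧ σ = 0 := by omega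
    simp [vdeg] at hv
  -- the coefficient of `[x, y]` at `ij = P + Q - (1, 1)`
  set ij : ℕ × ℕ := (P.1 + Q.1 - 1, P.2 + Q.2 - 1)
  have hij : ij + (1, 1) = P + Q := by
    ext <;> simp only [ij, Prod.fst_add, Prod.snd_add] <;> omega
  have hlevel := weight_add ij (1, 1) ρ σ
  rw [hij, weight_add, hPw, hQw, one_mul, one_mul] at hlevel
  have hsum := sum_bracketCoeffs_eq_zero hx hy hxy (ij := ij) (by
    rintro hij0
    simp only [hij0, Prod.fst_zero, Prod.snd_zero, zero_mul, zero_add] at hlevel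
    omega)
  rw [sum_congr rfl fun m hm => sum_congr rfl fun n hn => by
    rw [bracketCoeffs_apply_of_weight_le hρσ
      (by have := le_vdeg hm ρ σ; have := le_vdeg hn ρ σ; omega), hij]] at hsum
  rw [sum_eq_single_of_mem P hPsupp, sum_eq_single_of_mem Q hQsupp, if_pos rfl] at hsum
  · have := (mul_eq_zero.1 hsum).resolve_left
      (mul_ne_zero (Finsupp.mem_support_iff.1 hPsupp) (Finsupp.mem_support_iff.1 hQsupp))
    exact_mod_cast sub_eq_zero.1 this
  · intro n hn hnQ
    rw [if_neg fun h =>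
      hnQ (eq_and_eq_of_add_eq_add_of_Eset_eq_singleton hP hQ hPsupp hn h).2, mul_zero]
  · intro m hm hmP
    exact sum_eq_zero fun n hn => by
      rw [if_neg fun h =>
        hmP (eq_and_eq_of_add_eq_add_of_Eset_eq_singleton hP hQ hm hn h).1, mul_zero]

theorem eq_of_mem_Eset_of_Eset_eq_singleton (hx : Represents F α x) (hy : Represents F β y)
    (hxy : x * y - y * x = algebraMap F _ c) {ρ σ ρ' σ' : ℕ}
    (hv : ρ + σ < vdeg F α ρ σ + vdeg F β ρ σ) (hα : 0 < vdeg F α ρ σ)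
    (hv' : ρ' + σ' < vdeg F α ρ' σ' + vdeg F β ρ' σ') (hα' : 0 < vdeg F α ρ' σ')
    {P Q Q' : ℕ × ℕ} (hP : Eset F α ρ σ = {P}) (hP' : Eset F α ρ' σ' = {P})
    (hQ : Q ∈ Eset F β ρ σ) (hQ' : Q' ∈ Eset F β ρ' σ') : Q = Q' := by
  have hPw : 0 < P.1 * ρ + P.2 * σ := (mem_Eset.1 (hP ▸ mem_singleton_self P)).2 ▸ hα
  have hPw' : 0 < P.1 * ρ' + P.2 * σ' := (mem_Eset.1 (hP' ▸ mem_singleton_self P)).2 ▸ hα'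
  have hc := collinear_of_Eset_eq_singleton hx hy hxy hv hP hQ
  have hc' := collinear_of_Eset_eq_singleton hx hy hxy hv' hP' hQ'
  refine le_antisymm (le_of_collinear hPw' hc' hc ?_) (le_of_collinear hPw hc hc' ?_)
  · rw [(mem_Eset.1 hQ').2]
    exact le_vdeg (mem_Eset.1 hQ).1 _ _
  · rw [(mem_Eset.1 hQ).2]
    exact le_vdeg (mem_Eset.1 hQ').1 _ _

theorem card_Eset_le_one_of_Eset_eq_singleton (hx : Represents F α x) (hy : Represents F β y)
    (hxy : x * y - y * x = algebraMap F _ c) {ρ σ : ℕ}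
    (hv : ρ + σ < vdeg F α ρ σ + vdeg F β ρ σ) (hα : 0 < vdeg F α ρ σ) {P : ℕ × ℕ}
    (hP : Eset F α ρ σ = {P}) : (Eset F β ρ σ).card ≤ 1 :=
  card_le_one.2 fun _ hQ _ hQ' =>
    eq_of_mem_Eset_of_Eset_eq_singleton hx hy hxy hv hα hv hα hP hP hQ hQ'

theorem one_lt_card_Eset_of_one_lt_card_Eset (hx : Represents F α x) (hy : Represents F β y)
    (hxy : x * y - y * x = algebraMap F _ c) {ρ σ : ℕ}
    (hv : ρ + σ < vdeg F α ρ σ + vdeg F β ρ σ) (hβ : 0 < vdeg F β ρ σ)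
    (hα : 1 < (Eset F α ρ σ).card) : 1 < (Eset F β ρ σ).card := by
  by_contra! h
  obtain ⟨Q, hQ⟩ := card_eq_one.1 (le_antisymm h
    (card_pos.2 (Eset_nonempty (support_nonempty_of_vdeg_pos hβ) ρ σ)))
  have hyx : y * x - x * y = algebraMap F _ (-c) := by rw [map_neg, ← hxy, neg_sub]
  have := card_Eset_le_one_of_Eset_eq_singleton hy hx hyx (by omega) hβ hQ
  omega

theorem inter_Eset_nonempty_of_inter_Eset_eq_singleton (hx : Represents F α x)
    (hy : Represents F β y) (hxy : x * y - y * x = algebraMap F _ c)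
    (hvα : ∀ ρ σ : ℕ, 0 < ρ → 0 < σ → ρ + σ ≤ vdeg F α ρ σ)
    (hvβ : ∀ ρ σ : ℕ, 0 < ρ → 0 < σ → 0 < vdeg F β ρ σ)
    {ρ₁ σ₁ ρ₂ σ₂ : ℕ} (hρ₁ : 0 < ρ₁) (hσ₁ : 0 < σ₁) {P : ℕ × ℕ}
    (hP : Eset F α ρ₁ σ₁ ∩ Eset F α ρ₂ σ₂ = {P}) :
    (Eset F β ρ₁ σ₁ ∩ Eset F β ρ₂ σ₂).Nonempty := by
  have hv {s t : ℕ} (hs : 0 < s) :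
      let ρ := s * ρ₁ + t * ρ₂; let σ := s * σ₁ + t * σ₂
      ρ + σ < vdeg F α ρ σ + vdeg F β ρ σ ∧ 0 < vdeg F α ρ σ := by
    have hρ := Nat.add_pos_left (Nat.mul_pos hs hρ₁) (t * ρ₂)
    have hσ := Nat.add_pos_left (Nat.mul_pos hs hσ₁) (t * σ₂)
    have := hvα _ _ hρ hσ
    have := hvβ _ _ hρ hσ
    omega
  have hface {s t : ℕ} (hs : 0 < s) (ht : 0 < t) :
      Eset F α (s * ρ₁ + t * ρ₂) (s * σ₁ + t * σ₂) = {P} :=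
    (Eset_add_eq_inter hs ht (hP ▸ singleton_nonempty P)).trans hP
  -- leading monomials of `y` in a direction near `(ρ₁, σ₁)` and in one near `(ρ₂, σ₂)`
  set N := vdeg F β ρ₁ σ₁ + vdeg F β ρ₂ σ₂ + 1
  have hN : 0 < N := Nat.succ_pos _
  have hβ := support_nonempty_of_vdeg_pos (hvβ ρ₁ σ₁ hρ₁ hσ₁)
  obtain ⟨Q₁, hQ₁⟩ := Eset_nonempty hβ (N * ρ₁ + 1 * ρ₂) (N * σ₁ + 1 * σ₂)
  obtain ⟨Q₂, hQ₂⟩ := Eset_nonempty hβ (1 * ρ₁ + N * ρ₂) (1 * σ₁ + N * σ₂)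
  have hQ₁₂ : Q₁ = Q₂ := eq_of_mem_Eset_of_Eset_eq_singleton hx hy hxy (hv hN).1 (hv hN).2
    (hv one_pos).1 (hv one_pos).2 (hface hN one_pos) (hface one_pos hN) hQ₁ hQ₂
  refine ⟨Q₁, mem_inter.2 ⟨mem_Eset_of_mem_Eset_add hQ₁ (by omega), hQ₁₂ ▸ ?_⟩⟩
  rw [add_comm (1 * ρ₁), add_comm (1 * σ₁)] at hQ₂
  exact mem_Eset_of_mem_Eset_add hQ₂ (by omega)

end

theorem adjacent_edges_of_inverse (x y : WeylAlgebra F) (α β : (ℕ × ℕ) →₀ F)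
    (hrepx : Represents F α x) (hrepy : Represents F β y)
    (hxy : x * y - y * x = 1)
    (hvall : ∀ ρ σ : ℕ, 0 < ρ → 0 < σ → Nat.Coprime ρ σ → ρ + σ ≤ vdeg F α ρ σ)
    (ρ₁ σ₁ ρ₂ σ₂ : ℕ) (hρ₁ : 0 < ρ₁) (hσ₁ : 0 < σ₁) (hρ₂ : 0 < ρ₂) (hσ₂ : 0 < σ₂)
    (hne : ρ₁ * σ₂ ≠ ρ₂ * σ₁)
    (he₁ : 1 < (Eset F α ρ₁ σ₁).card) (he₂ : 1 < (Eset F α ρ₂ σ₂).card)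
    (hadj : (Eset F α ρ₁ σ₁ ∩ Eset F α ρ₂ σ₂).card = 1) :
    1 < (Eset F β ρ₁ σ₁).card ∧ 1 < (Eset F β ρ₂ σ₂).card ∧
      (Eset F β ρ₁ σ₁ ∩ Eset F β ρ₂ σ₂).card = 1 := by
  have hvα {ρ σ : ℕ} (hρ : 0 < ρ) (hσ : 0 < σ) := le_vdeg_of_forall_coprime hvall hρ hσ
  have hvβ {ρ σ : ℕ} (hρ : 0 < ρ) (hσ : 0 < σ) := vdeg_pos_of_commutator_eq_one hrepy hxy hρ hσ
  rw [← map_one (algebraMap F _)] at hxy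
  have hedge {ρ σ : ℕ} (hρ : 0 < ρ) (hσ : 0 < σ) (h : 1 < (Eset F α ρ σ).card) :
      1 < (Eset F β ρ σ).card := by
    refine one_lt_card_Eset_of_one_lt_card_Eset hrepx hrepy hxy ?_ (hvβ hρ hσ) h
    have := hvα hρ hσ
    have := hvβ hρ hσ
    omega
  obtain ⟨P, hP⟩ := Finset.card_eq_one.1 hadj
  refine ⟨hedge hρ₁ hσ₁ he₁, hedge hρ₂ hσ₂ he₂, le_antisymm (card_inter_Eset_le_one hne) ?_⟩
  exact Finset.card_pos.2 (inter_Eset_nonempty_of_inter_Eset_eq_singleton hrepx hrepy hxy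
    (fun _ _ => hvα) (fun _ _ => hvβ) hρ₁ hσ₁ hP)
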